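/- arXiv:1606.06360 — 2 statements merged into one kernel-verified Lean document; each statement's English description precedes it below -/
import Mathlib

section
/- If k ≥ 1 is even, then T_k(q) − q = (q−2)·∏_{j=1}^{(k−2)/2} (q − 2cos(2jπ/(k−1)))·∏_{j=1}^{k/2} (q − 2cos(2jπ/(k+1))) for all complex q. -/
/-!
Substitute `q = z + z⁻¹`, so that `T k q = z ^ k + z⁻ᵏ`. For `k` even, `z ^ k (T k q - q)` factors
as `(z ^ (k - 1) - 1) (z ^ (k + 1) - 1)`, a product of two cyclotomic-type factors of odd degree.
For odd `n = 2m + 1` the `n`-th roots of unity other than `1` come in conjugate pairs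
`ζ ^ j, ζ ^ (n - j)` with `1 ≤ j ≤ m`, and `(z - w)(z - w⁻¹) = z (q - (w + w⁻¹))`, so
`z ^ n - 1 = (z - 1) z ^ m ∏ (q - 2 cos (2jπ/n))`. Finally `(z - 1) ^ 2 = z (q - 2)`.
-/

noncomputable def T : ℕ → ℂ → ℂ
  | 0 => fun _ => 2
  | 1 => fun q => q
  | (n + 2) => fun q => q * T (n + 1) q - T n q

open Finset Real Complex

theorem Finset.prod_range_two_mul_add_one {M : Type*} [CommMonoid M] (f : ℕ → M) (m : ℕ) :
    ∏ i ∈ range (2 * m + 1), f i = f 0 * ∏ i ∈ Icc 1 m, (f i * f (2 * m + 1 - i)) := by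
  rw [prod_mul_distrib, ← Ico_add_one_right_eq_Icc, prod_Ico_reflect f 1 (by omega),
    ← Nat.Ico_zero_eq_range, prod_eq_prod_Ico_succ_bot (by omega),
    show 2 * m + 1 + 1 - (m + 1) = m + 1 by omega, show 2 * m + 1 + 1 - 1 = 2 * m + 1 by omega,
    prod_Ico_consecutive f (by omega) (by omega)]

theorem T_add_inv {z : ℂ} (hz : z ≠ 0) (k : ℕ) : T k (z + z⁻¹) = z ^ k + z⁻¹ ^ k := by
  induction k using Nat.strong_induction_on with
  | _ k ih =>
    match k with
    | 0 => norm_num [T]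
    | 1 => simp [T]
    | n + 2 =>
      simp only [T, ih (n + 1) (by omega), ih n (by omega)]
      linear_combination (z ^ n + z⁻¹ ^ n) * mul_inv_cancel₀ hz

theorem mul_add_inv_sub_add_inv {K : Type*} [Field K] {z w : K} (hz : z ≠ 0) (hw : w ≠ 0) :
    z * (z + z⁻¹ - (w + w⁻¹)) = (z - w) * (z - w⁻¹) := by
  field_simp
  ring

theorem exp_two_pi_I_div_pow_add_inv (n j : ℕ) :
    cexp (2 * π * I / n) ^ j + (cexp (2 * π * I / n) ^ j)⁻¹ =
      2 * ((Real.cos (2 * j * π / n) : ℝ) : ℂ) := by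
  rw [← Complex.exp_nat_mul, ← Complex.exp_neg, ofReal_cos, two_cos]
  congr 2 <;> push_cast <;> ring

theorem pow_two_mul_add_one_sub_one {z : ℂ} (hz : z ≠ 0) (m : ℕ) :
    z ^ (2 * m + 1) - 1 = (z - 1) * z ^ m *
      ∏ j ∈ Icc 1 m, (z + z⁻¹ - 2 * ((Real.cos (2 * j * π / (2 * m + 1 : ℕ)) : ℝ) : ℂ)) := by
  set n := 2 * m + 1
  set ζ := cexp (2 * π * I / n)
  have hζ : IsPrimitiveRoot ζ n := isPrimitiveRoot_exp n (by omega)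
  have hζ0 : ζ ≠ 0 := Complex.exp_ne_zero _
  have hroots : z ^ n - 1 = ∏ i ∈ range n, (z - ζ ^ i) := by
    simpa [Polynomial.eval_prod] using congrArg (Polynomial.eval z)
      (X_pow_sub_C_eq_prod hζ (by omega : 0 < n) (one_pow n))
  have hpair : ∀ i ∈ Icc 1 m, (z - ζ ^ i) * (z - ζ ^ (n - i)) =
      z * (z + z⁻¹ - 2 * ((Real.cos (2 * i * π / n) : ℝ) : ℂ)) := by
    intro i hi
    have hin : i ≤ n := by simp only [mem_Icc] at hi; omega
    rw [pow_sub₀ ζ hζ0 hin, hζ.pow_eq_one, one_mul, ← exp_two_pi_I_div_pow_add_inv,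
      mul_add_inv_sub_add_inv hz (pow_ne_zero i hζ0)]
  rw [hroots, prod_range_two_mul_add_one, prod_congr rfl hpair, prod_mul_distrib, prod_const,
    Nat.card_Icc, Nat.add_sub_cancel, pow_zero]
  ring

theorem pow_mul_T_add_inv_sub {z : ℂ} (hz : z ≠ 0) (k : ℕ) :
    z ^ (k + 1) * (T (k + 1) (z + z⁻¹) - (z + z⁻¹)) = (z ^ k - 1) * (z ^ (k + 2) - 1) := by
  rw [T_add_inv hz, inv_pow]
  field_simp
  ring

theorem Complex.exists_add_inv_eq (q : ℂ) : ∃ z ≠ 0, z + z⁻¹ = q := by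
  obtain ⟨w, hw⟩ := IsAlgClosed.exists_pow_nat_eq (q ^ 2 - 4) two_pos
  have hroot : ((q + w) / 2) * ((q - w) / 2) = 1 := by linear_combination -hw / 4
  refine ⟨(q + w) / 2, left_ne_zero_of_mul_eq_one hroot, ?_⟩
  rw [inv_eq_of_mul_eq_one_right hroot]
  ring

theorem sub_one_sq_eq_mul_add_inv_sub_two {K : Type*} [Field K] {z : K} (hz : z ≠ 0) :
    (z - 1) ^ 2 = z * (z + z⁻¹ - 2) := by
  field_simp
  ring

theorem stmt_10 (k : ℕ) (hk : 1 ≤ k) (hke : Even k) (q : ℂ) :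
    T k q - q = (q - 2) *
      (∏ j ∈ Finset.Icc 1 ((k - 2) / 2),
        (q - 2 * ((Real.cos (2 * j * Real.pi / (k - 1)) : ℝ) : ℂ))) *
      (∏ j ∈ Finset.Icc 1 (k / 2),
        (q - 2 * ((Real.cos (2 * j * Real.pi / (k + 1)) : ℝ) : ℂ))) := by
  obtain ⟨a, rfl⟩ : ∃ a, k = 2 * a + 1 + 1 := by
    obtain ⟨c, rfl⟩ := hke
    exact ⟨c - 1, by omega⟩
  obtain ⟨z, hz, rfl⟩ := Complex.exists_add_inv_eq q
  have hsub : ((2 * a + 1 + 1 : ℕ) : ℝ) - 1 = (2 * a + 1 : ℕ) := by push_cast; ring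
  have hadd : ((2 * a + 1 + 1 : ℕ) : ℝ) + 1 = (2 * (a + 1) + 1 : ℕ) := by push_cast; ring
  rw [hsub, hadd, show (2 * a + 1 + 1 - 2) / 2 = a by omega,
    show (2 * a + 1 + 1) / 2 = a + 1 by omega]
  refine mul_left_cancel₀ (pow_ne_zero (2 * a + 1 + 1) hz) ?_
  rw [pow_mul_T_add_inv_sub hz, pow_two_mul_add_one_sub_one hz,
    show 2 * a + 1 + 2 = 2 * (a + 1) + 1 by ring, pow_two_mul_add_one_sub_one hz]
  set P₁ := ∏ j ∈ Icc 1 a, (z + z⁻¹ - 2 * ((Real.cos (2 * j * π / (2 * a + 1 : ℕ)) : ℝ) : ℂ))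
  set P₂ := ∏ j ∈ Icc 1 (a + 1),
    (z + z⁻¹ - 2 * ((Real.cos (2 * j * π / (2 * (a + 1) + 1 : ℕ)) : ℝ) : ℂ))
  linear_combination z ^ (2 * a + 1) * P₁ * P₂ * sub_one_sq_eq_mul_add_inv_sub_two hz
end

section
/- Let Q ∈ SL(2,ℂ) with trace q ≠ 2. Then for every positive integer k, det(I + Q + Q² + ⋯ + Q^{k−1}) = (T_k(q) − 2)/(q − 2). -/
/-!
Cayley–Hamilton gives `Q² = q Q - 1`, so `tr Qⁿ` satisfies the Chebyshev recursion and equals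
`T n q`. For a `2 × 2` matrix `det (A - 1) = det A - tr A + 1`, hence `det (Qᵏ - 1) = 2 - T k q`
and `det (Q - 1) = 2 - q ≠ 0`; the geometric sum identity `(∑ Qⁱ) (Q - 1) = Qᵏ - 1` finishes.
-/

namespace Matrix

variable {R : Type*} [CommRing R]

theorem det_sub_one_fin_two (A : Matrix (Fin 2) (Fin 2) R) :
    (A - 1).det = A.det - A.trace + 1 := by
  simp only [det_fin_two, trace_fin_two, sub_apply, one_apply_eq, one_apply_ne, ne_eq,
    zero_ne_one, one_ne_zero, not_false_eq_true, sub_zero]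
  ring

theorem sq_fin_two (A : Matrix (Fin 2) (Fin 2) R) : A ^ 2 = A.trace • A - A.det • 1 := by
  ext i j
  fin_cases i <;> fin_cases j <;>
    simp only [Fin.zero_eta, Fin.mk_one, Fin.isValue, sq, mul_apply, Fin.sum_univ_two,
      trace_fin_two, det_fin_two, sub_apply, smul_apply, smul_eq_mul, one_apply_eq,
      one_apply_ne, ne_eq, zero_ne_one, one_ne_zero, not_false_eq_true, mul_one, mul_zero,
      sub_zero] <;> ring

theorem trace_pow_add_two_fin_two (A : Matrix (Fin 2) (Fin 2) R) (n : ℕ) :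
    (A ^ (n + 2)).trace = A.trace * (A ^ (n + 1)).trace - A.det * (A ^ n).trace := by
  rw [pow_add, sq_fin_two, mul_sub, Matrix.mul_smul, Matrix.mul_smul, mul_one, ← pow_succ,
    trace_sub, trace_smul, trace_smul, smul_eq_mul, smul_eq_mul]

end Matrix

theorem trace_pow_eq_T {Q : Matrix (Fin 2) (Fin 2) ℂ} (hdet : Q.det = 1) (n : ℕ) :
    (Q ^ n).trace = T n Q.trace := by
  induction n using Nat.twoStepInduction with
  | zero => simp [T]
  | one => simp [T]
  | more n ih ih' => rw [Q.trace_pow_add_two_fin_two, hdet, ih, ih', one_mul, T]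

theorem stmt_12_general (Q : Matrix (Fin 2) (Fin 2) ℂ) (hdet : Q.det = 1)
    (hq : Q.trace ≠ 2) (k : ℕ) :
    (∑ i ∈ Finset.range k, Q ^ i).det = (T k Q.trace - 2) / (Q.trace - 2) := by
  have hdet_mul : (∑ i ∈ Finset.range k, Q ^ i).det * (Q - 1).det = (Q ^ k - 1).det := by
    rw [← Matrix.det_mul, geom_sum_mul]
  rw [Matrix.det_sub_one_fin_two, Matrix.det_sub_one_fin_two, Matrix.det_pow, hdet, one_pow,
    trace_pow_eq_T hdet] at hdet_mul
  rw [eq_div_iff (sub_ne_zero.mpr hq)]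
  linear_combination -hdet_mul

theorem stmt_12 (Q : Matrix (Fin 2) (Fin 2) ℂ) (hdet : Q.det = 1)
    (hq : Q.trace ≠ 2) (k : ℕ) (hk : 0 < k) :
    (∑ i ∈ Finset.range k, Q ^ i).det = (T k Q.trace - 2) / (Q.trace - 2) :=
  stmt_12_general Q hdet hq k
end
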